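/- For each integer k ≥ 11, let P_k be the set of primes in the open interval (2^{k-1}, 2^k), and let 𝓗_k be a family of 4-element subsets of P_k such that: (i) any two distinct members of 𝓗_k intersect in at most 2 elements, and (ii) for all pairwise disjoint 2-element subsets K, L, M, N of P_k, at least one of K ∪ L, L ∪ M, M ∪ N, N ∪ K does not lie in 𝓗_k. Let A_k = { ∏_{p ∈ H} p : H ∈ 𝓗_k } and let A be the union of the set of all prime numbers together with ⋃_{k ≥ 11} A_k. Then A is a multiplicative Sidon set. -/

import Mathlib

lemma prodPrime_ne_zero (S : Multiset ℕ) (h : ∀ p ∈ S, Nat.Prime p) : S.prod ≠ 0 := by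
  intro h0
  rw [Multiset.prod_eq_zero_iff] at h0
  exact (h 0 h0).ne_zero rfl

lemma fact_count (S : Multiset ℕ) (h : ∀ p ∈ S, Nat.Prime p) (q : ℕ) :
    (S.prod).factorization q = S.count q := by
  induction S using Multiset.induction with
  | empty => simp
  | cons a S ih =>
    have ha := h a (Multiset.mem_cons_self _ _)
    have hS : ∀ p ∈ S, Nat.Prime p := fun p hp => h p (Multiset.mem_cons_of_mem hp)
    rw [Multiset.prod_cons, Nat.factorization_mul ha.ne_zero (prodPrime_ne_zero S hS)]
    rw [Finsupp.add_apply, ih hS, ha.factorization, Multiset.count_cons]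
    by_cases hqa : a = q
    · simp [Finsupp.single_apply, hqa, Nat.add_comm]
    · have : ¬ q = a := fun h => hqa h.symm
      simp [Finsupp.single_apply, hqa, this]

lemma key_mult (S₁ S₂ S₃ S₄ : Multiset ℕ)
    (h₁ : ∀ p ∈ S₁, Nat.Prime p) (h₂ : ∀ p ∈ S₂, Nat.Prime p)
    (h₃ : ∀ p ∈ S₃, Nat.Prime p) (h₄ : ∀ p ∈ S₄, Nat.Prime p)
    (he : S₁.prod * S₂.prod = S₃.prod * S₄.prod) : S₁ + S₂ = S₃ + S₄ := by
  rw [Multiset.ext]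
  intro q
  have := congrArg (fun n => n.factorization q) he
  simp only [Nat.factorization_mul (prodPrime_ne_zero _ h₁) (prodPrime_ne_zero _ h₂),
    Nat.factorization_mul (prodPrime_ne_zero _ h₃) (prodPrime_ne_zero _ h₄),
    Finsupp.add_apply, fact_count _ h₁, fact_count _ h₂, fact_count _ h₃, fact_count _ h₄] at this
  simpa [Multiset.count_add] using this

lemma window_unique {p k k' : ℕ} (hk : 11 ≤ k) (hk' : 11 ≤ k')
    (h1 : 2 ^ (k - 1) < p ∧ p < 2 ^ k) (h2 : 2 ^ (k' - 1) < p ∧ p < 2 ^ k') : k = k' := by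
  by_contra hne
  rcases Nat.lt_or_ge k k' with h | h
  · have : (2:ℕ) ^ k ≤ 2 ^ (k' - 1) := Nat.pow_le_pow_right (by norm_num) (by omega)
    omega
  · have : (2:ℕ) ^ k' ≤ 2 ^ (k - 1) := Nat.pow_le_pow_right (by norm_num) (by omega)
    omega

lemma finset_count (H : Finset ℕ) (q : ℕ) : H.val.count q = if q ∈ H then 1 else 0 := by
  split
  · exact Multiset.count_eq_one_of_mem H.nodup (by assumption)
  · exact Multiset.count_eq_zero_of_notMem (by assumption)

lemma card_split (A B C : Finset ℕ) (hsub : A ⊆ B ∪ C) :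
    (A ∩ B).card + (A ∩ C).card = A.card + (A ∩ B ∩ C).card := by
  have h1 := Finset.card_union_add_card_inter (A ∩ B) (A ∩ C)
  have h2 : (A ∩ B) ∪ (A ∩ C) = A := by
    rw [← Finset.inter_union_distrib_left]
    exact Finset.inter_eq_left.2 hsub
  have h3 : (A ∩ B) ∩ (A ∩ C) = A ∩ B ∩ C := by
    ext q; simp only [Finset.mem_inter]; tauto
  rw [h2, h3] at h1
  omega

lemma quad_quad (𝓗 : ℕ → Set (Finset ℕ))
    (hmem : ∀ k, 11 ≤ k → ∀ H ∈ 𝓗 k, H.card = 4 ∧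
      ∀ p ∈ H, p.Prime ∧ 2 ^ (k - 1) < p ∧ p < 2 ^ k)
    (hi : ∀ k, 11 ≤ k → ∀ H₁ ∈ 𝓗 k, ∀ H₂ ∈ 𝓗 k, H₁ ≠ H₂ → (H₁ ∩ H₂).card ≤ 2)
    (hii : ∀ k, 11 ≤ k → ∀ K L M N : Finset ℕ,
      (∀ p ∈ K ∪ L ∪ M ∪ N, p.Prime ∧ 2 ^ (k - 1) < p ∧ p < 2 ^ k) →
      K.card = 2 → L.card = 2 → M.card = 2 → N.card = 2 →
      Disjoint K L → Disjoint K M → Disjoint K N →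
      Disjoint L M → Disjoint L N → Disjoint M N →
      ¬(K ∪ L ∈ 𝓗 k ∧ L ∪ M ∈ 𝓗 k ∧ M ∪ N ∈ 𝓗 k ∧ N ∪ K ∈ 𝓗 k))
    (k : ℕ) (hk : 11 ≤ k) (H₁ H₂ H₃ H₄ : Finset ℕ)
    (m1 : H₁ ∈ 𝓗 k) (m2 : H₂ ∈ 𝓗 k) (m3 : H₃ ∈ 𝓗 k) (m4 : H₄ ∈ 𝓗 k)
    (hE : H₁.val + H₂.val = H₃.val + H₄.val) :
    (H₁ = H₃ ∧ H₂ = H₄) ∨ (H₁ = H₄ ∧ H₂ = H₃) := by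
  have c1 := (hmem k hk H₁ m1).1
  have c2 := (hmem k hk H₂ m2).1
  have c3 := (hmem k hk H₃ m3).1
  have c4 := (hmem k hk H₄ m4).1
  by_cases h13 : H₁ = H₃
  · left
    refine ⟨h13, Finset.val_injective ?_⟩
    have : H₁.val + H₂.val = H₁.val + H₄.val := by rw [hE, h13]
    exact add_left_cancel this
  by_cases h14 : H₁ = H₄
  · right
    refine ⟨h14, Finset.val_injective ?_⟩
    have : H₂.val + H₁.val = H₃.val + H₁.val := by
      rw [add_comm, hE, h14, add_comm]
    exact add_right_cancel this
  exfalso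
  have h24 : H₂ ≠ H₄ := by
    intro h
    apply h13
    apply Finset.val_injective
    have : H₁.val + H₂.val = H₃.val + H₂.val := by rw [hE, h]
    exact add_right_cancel this
  have h23 : H₂ ≠ H₃ := by
    intro h
    apply h14
    apply Finset.val_injective
    have : H₁.val + H₂.val = H₄.val + H₂.val := by rw [hE, h, add_comm]
    exact add_right_cancel this
  have hcnt : ∀ q, (if q ∈ H₁ then 1 else 0) + (if q ∈ H₂ then 1 else 0) =
      (if q ∈ H₃ then 1 else 0) + (if q ∈ H₄ then (1:ℕ) else 0) := by
    intro q
    have := congrArg (Multiset.count q) hE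
    simpa [Multiset.count_add, finset_count] using this
  have hUnion : H₁ ∪ H₂ = H₃ ∪ H₄ := by
    ext q
    have := hcnt q
    by_cases h1 : q ∈ H₁ <;> by_cases h2 : q ∈ H₂ <;> by_cases h3 : q ∈ H₃ <;>
      by_cases h4 : q ∈ H₄ <;> simp [h1, h2, h3, h4] at this ⊢
  have hInter : H₁ ∩ H₂ = H₃ ∩ H₄ := by
    ext q
    have := hcnt q
    by_cases h1 : q ∈ H₁ <;> by_cases h2 : q ∈ H₂ <;> by_cases h3 : q ∈ H₃ <;>
      by_cases h4 : q ∈ H₄ <;> simp [h1, h2, h3, h4] at this ⊢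
  -- cross intersection bounds
  have b13 := hi k hk H₁ m1 H₃ m3 h13
  have b14 := hi k hk H₁ m1 H₄ m4 h14
  have b23 := hi k hk H₂ m2 H₃ m3 h23
  have b24 := hi k hk H₂ m2 H₄ m4 h24
  have hsub1 : H₁ ⊆ H₃ ∪ H₄ := by
    intro a ha
    have : a ∈ H₁ ∪ H₂ := Finset.mem_union_left _ ha
    rwa [hUnion] at this
  have hsub2 : H₂ ⊆ H₃ ∪ H₄ := by
    intro a ha
    have : a ∈ H₁ ∪ H₂ := Finset.mem_union_right _ ha
    rwa [hUnion] at this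
  have hsub3 : H₃ ⊆ H₁ ∪ H₂ := by
    intro a ha; rw [hUnion]; exact Finset.mem_union_left _ ha
  have hsub4 : H₄ ⊆ H₁ ∪ H₂ := by
    intro a ha; rw [hUnion]; exact Finset.mem_union_right _ ha
  have e1 : H₁ ∩ H₃ ∩ H₄ = H₁ ∩ H₂ := by
    ext q
    have := Finset.ext_iff.1 hInter q
    simp only [Finset.mem_inter] at this ⊢
    tauto
  have s1 := card_split H₁ H₃ H₄ hsub1
  rw [e1, c1] at s1
  have hdisj12 : H₁ ∩ H₂ = ∅ := by
    rw [← Finset.card_eq_zero]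
    omega
  have hd12card : (H₁ ∩ H₂).card = 0 := by rw [hdisj12]; simp
  have e2 : H₂ ∩ H₃ ∩ H₄ = ∅ := by
    ext q
    have := Finset.ext_iff.1 hInter q
    have h12 := Finset.ext_iff.1 hdisj12 q
    simp only [Finset.mem_inter, Finset.notMem_empty] at this h12 ⊢
    tauto
  have s2 := card_split H₂ H₃ H₄ hsub2
  rw [e2, c2] at s2
  simp at s2
  have k13 : (H₁ ∩ H₃).card = 2 := by omega
  have k14 : (H₁ ∩ H₄).card = 2 := by omega
  have k23 : (H₂ ∩ H₃).card = 2 := by omega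
  have k24 : (H₂ ∩ H₄).card = 2 := by omega
  set K := H₁ ∩ H₃ with hK
  set L := H₁ ∩ H₄ with hL
  set M := H₂ ∩ H₄ with hM
  set N := H₂ ∩ H₃ with hN
  have hd34 : H₃ ∩ H₄ = ∅ := by rw [← hInter]; exact hdisj12
  have memE12 : ∀ q, ¬(q ∈ H₁ ∧ q ∈ H₂) := by
    intro q hq
    have : q ∈ (∅ : Finset ℕ) := hdisj12 ▸ Finset.mem_inter.2 hq
    simp at this
  have memE34 : ∀ q, ¬(q ∈ H₃ ∧ q ∈ H₄) := by
    intro q hq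
    have : q ∈ (∅ : Finset ℕ) := hd34 ▸ Finset.mem_inter.2 hq
    simp at this
  have dKL : Disjoint K L := by
    rw [Finset.disjoint_left]
    intro a haK haL
    simp only [hK, hL, Finset.mem_inter] at haK haL
    exact memE34 a ⟨haK.2, haL.2⟩
  have dKM : Disjoint K M := by
    rw [Finset.disjoint_left]
    intro a haK haM
    simp only [hK, hM, Finset.mem_inter] at haK haM
    exact memE12 a ⟨haK.1, haM.1⟩
  have dKN : Disjoint K N := by
    rw [Finset.disjoint_left]
    intro a haK haN
    simp only [hK, hN, Finset.mem_inter] at haK haN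
    exact memE12 a ⟨haK.1, haN.1⟩
  have dLM : Disjoint L M := by
    rw [Finset.disjoint_left]
    intro a haL haM
    simp only [hL, hM, Finset.mem_inter] at haL haM
    exact memE12 a ⟨haL.1, haM.1⟩
  have dLN : Disjoint L N := by
    rw [Finset.disjoint_left]
    intro a haL haN
    simp only [hL, hN, Finset.mem_inter] at haL haN
    exact memE12 a ⟨haL.1, haN.1⟩
  have dMN : Disjoint M N := by
    rw [Finset.disjoint_left]
    intro a haM haN
    simp only [hM, hN, Finset.mem_inter] at haM haN
    exact memE34 a ⟨haN.2, haM.2⟩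
  have uKL : K ∪ L = H₁ := by
    ext q
    have hu := Finset.ext_iff.1 hUnion q
    simp only [hK, hL, Finset.mem_union, Finset.mem_inter] at hu ⊢
    tauto
  have uMN : M ∪ N = H₂ := by
    ext q
    have hu := Finset.ext_iff.1 hUnion q
    simp only [hM, hN, Finset.mem_union, Finset.mem_inter] at hu ⊢
    tauto
  have uNK : N ∪ K = H₃ := by
    ext q
    have hu := Finset.ext_iff.1 hUnion q
    simp only [hN, hK, Finset.mem_union, Finset.mem_inter] at hu ⊢
    tauto
  have uLM : L ∪ M = H₄ := by
    ext q
    have hu := Finset.ext_iff.1 hUnion q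
    simp only [hL, hM, Finset.mem_union, Finset.mem_inter] at hu ⊢
    tauto
  apply hii k hk K L M N ?_ k13 k14 k24 k23 dKL dKM dKN dLM dLN dMN
  · refine ⟨uKL ▸ m1, uLM ▸ m4, uMN ▸ m2, uNK ▸ m3⟩
  · intro p hp
    simp only [Finset.mem_union, hK, hL, hM, hN, Finset.mem_inter] at hp
    rcases hp with ((⟨h, _⟩ | ⟨h, _⟩) | ⟨h, _⟩) | ⟨h, _⟩
    · exact (hmem k hk H₁ m1).2 p h
    · exact (hmem k hk H₁ m1).2 p h
    · exact (hmem k hk H₂ m2).2 p h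
    · exact (hmem k hk H₂ m2).2 p h

lemma mixed (𝓗 : ℕ → Set (Finset ℕ))
    (hmem : ∀ k, 11 ≤ k → ∀ H ∈ 𝓗 k, H.card = 4 ∧
      ∀ p ∈ H, p.Prime ∧ 2 ^ (k - 1) < p ∧ p < 2 ^ k)
    (hi : ∀ k, 11 ≤ k → ∀ H₁ ∈ 𝓗 k, ∀ H₂ ∈ 𝓗 k, H₁ ≠ H₂ → (H₁ ∩ H₂).card ≤ 2)
    {k₁ k₂ : ℕ} (hk₁ : 11 ≤ k₁) (hk₂ : 11 ≤ k₂)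
    {H₁ H₂ : Finset ℕ} (m1 : H₁ ∈ 𝓗 k₁) (m2 : H₂ ∈ 𝓗 k₂)
    {p q : ℕ} (hE : p ::ₘ H₁.val = q ::ₘ H₂.val) : p = q ∧ H₁ = H₂ := by
  by_cases hpq : p = q
  · subst hpq
    refine ⟨rfl, Finset.val_injective ?_⟩
    exact (Multiset.cons_inj_right p).1 hE
  exfalso
  have c1 := (hmem k₁ hk₁ H₁ m1).1
  have c2 := (hmem k₂ hk₂ H₂ m2).1
  have hq1 : q ∈ H₁.val := by
    have : q ∈ p ::ₘ H₁.val := by rw [hE]; exact Multiset.mem_cons_self _ _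
    rcases Multiset.mem_cons.1 this with h | h
    · exact absurd h.symm hpq
    · exact h
  have hp2 : p ∈ H₂.val := by
    have : p ∈ q ::ₘ H₂.val := by rw [← hE]; exact Multiset.mem_cons_self _ _
    rcases Multiset.mem_cons.1 this with h | h
    · exact absurd h hpq
    · exact h
  have hp1 : p ∉ H₁.val := by
    intro hp
    have hc := congrArg (Multiset.count p) hE
    rw [Multiset.count_cons_self, Multiset.count_cons_of_ne hpq] at hc
    have h1 : Multiset.count p H₁.val = 1 := Multiset.count_eq_one_of_mem H₁.nodup hp
    have h2 : Multiset.count p H₂.val ≤ 1 :=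
      Multiset.nodup_iff_count_le_one.1 H₂.nodup p
    omega
  have hT' : p ::ₘ H₁.val.erase q = H₂.val := by
    have := congrArg (fun s => Multiset.erase s q) hE
    rwa [Multiset.erase_cons_tail _ (fun h => hpq h), Multiset.erase_cons_head] at this
  set T := Multiset.erase H₁.val q with hT
  have hT2 : T = H₂.val.erase p := by rw [← hT', Multiset.erase_cons_head]
  have hTcard : Multiset.card T = 3 := by
    rw [hT, Multiset.card_erase_of_mem hq1, show Multiset.card H₁.val = 4 from c1]
    rfl
  have hTle1 : T ≤ H₁.val := Multiset.erase_le _ _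
  have hTle2 : T ≤ H₂.val := by rw [hT2]; exact Multiset.erase_le _ _
  obtain ⟨r, hr⟩ : ∃ r, r ∈ T := Multiset.exists_mem_of_ne_zero (by
    intro h; rw [h] at hTcard; simp at hTcard)
  have hr1 : r ∈ H₁ := Multiset.mem_of_le hTle1 hr
  have hr2 : r ∈ H₂ := Multiset.mem_of_le hTle2 hr
  have hkk : k₁ = k₂ :=
    window_unique hk₁ hk₂ ((hmem k₁ hk₁ H₁ m1).2 r hr1).2 ((hmem k₂ hk₂ H₂ m2).2 r hr2).2
  subst hkk
  have hne : H₁ ≠ H₂ := by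
    intro h
    exact hp1 (h ▸ hp2)
  have hb := hi k₁ hk₁ H₁ m1 H₂ m2 hne
  have hnd : T.Nodup := Multiset.Nodup.erase _ H₁.nodup
  have hsub : T.toFinset ⊆ H₁ ∩ H₂ := by
    intro a ha
    rw [Multiset.mem_toFinset] at ha
    exact Finset.mem_inter.2 ⟨Multiset.mem_of_le hTle1 ha, Multiset.mem_of_le hTle2 ha⟩
  have : T.toFinset.card = 3 := by
    rw [Multiset.toFinset_card_of_nodup hnd]
    exact hTcard
  have := Finset.card_le_card hsub
  omega

lemma pair_eq {p q r s : ℕ} (h : ({p} : Multiset ℕ) + {q} = {r} + {s}) :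
    (p = r ∧ q = s) ∨ (p = s ∧ q = r) := by
  rw [Multiset.singleton_add, Multiset.singleton_add] at h
  by_cases hpr : p = r
  · subst hpr
    left
    exact ⟨rfl, Multiset.singleton_inj.1 ((Multiset.cons_inj_right p).1 h)⟩
  · have hps : p = s := by
      have : p ∈ r ::ₘ ({s} : Multiset ℕ) := by rw [← h]; exact Multiset.mem_cons_self _ _
      rcases Multiset.mem_cons.1 this with h' | h'
      · exact absurd h' hpr
      · simpa using h'
    have hqr : r = q := by
      have : r ∈ p ::ₘ ({q} : Multiset ℕ) := by rw [h]; exact Multiset.mem_cons_self _ _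
      rcases Multiset.mem_cons.1 this with h' | h'
      · exact absurd h'.symm hpr
      · simpa using h'
    right
    exact ⟨hps, hqr.symm⟩

lemma quad_quad_gen (𝓗 : ℕ → Set (Finset ℕ))
    (hmem : ∀ k, 11 ≤ k → ∀ H ∈ 𝓗 k, H.card = 4 ∧
      ∀ p ∈ H, p.Prime ∧ 2 ^ (k - 1) < p ∧ p < 2 ^ k)
    (hi : ∀ k, 11 ≤ k → ∀ H₁ ∈ 𝓗 k, ∀ H₂ ∈ 𝓗 k, H₁ ≠ H₂ → (H₁ ∩ H₂).card ≤ 2)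
    (hii : ∀ k, 11 ≤ k → ∀ K L M N : Finset ℕ,
      (∀ p ∈ K ∪ L ∪ M ∪ N, p.Prime ∧ 2 ^ (k - 1) < p ∧ p < 2 ^ k) →
      K.card = 2 → L.card = 2 → M.card = 2 → N.card = 2 →
      Disjoint K L → Disjoint K M → Disjoint K N →
      Disjoint L M → Disjoint L N → Disjoint M N →
      ¬(K ∪ L ∈ 𝓗 k ∧ L ∪ M ∈ 𝓗 k ∧ M ∪ N ∈ 𝓗 k ∧ N ∪ K ∈ 𝓗 k))
    {k₁ k₂ k₃ k₄ : ℕ} (hk₁ : 11 ≤ k₁) (hk₂ : 11 ≤ k₂) (hk₃ : 11 ≤ k₃) (hk₄ : 11 ≤ k₄)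
    {H₁ H₂ H₃ H₄ : Finset ℕ}
    (m1 : H₁ ∈ 𝓗 k₁) (m2 : H₂ ∈ 𝓗 k₂) (m3 : H₃ ∈ 𝓗 k₃) (m4 : H₄ ∈ 𝓗 k₄)
    (hE : H₁.val + H₂.val = H₃.val + H₄.val) :
    (H₁ = H₃ ∧ H₂ = H₄) ∨ (H₁ = H₄ ∧ H₂ = H₃) := by
  have w1 : ∀ p ∈ H₁, 2 ^ (k₁ - 1) < p ∧ p < 2 ^ k₁ :=
    fun p hp => ((hmem k₁ hk₁ H₁ m1).2 p hp).2
  have w2 : ∀ p ∈ H₂, 2 ^ (k₂ - 1) < p ∧ p < 2 ^ k₂ :=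
    fun p hp => ((hmem k₂ hk₂ H₂ m2).2 p hp).2
  have w3 : ∀ p ∈ H₃, 2 ^ (k₃ - 1) < p ∧ p < 2 ^ k₃ :=
    fun p hp => ((hmem k₃ hk₃ H₃ m3).2 p hp).2
  have w4 : ∀ p ∈ H₄, 2 ^ (k₄ - 1) < p ∧ p < 2 ^ k₄ :=
    fun p hp => ((hmem k₄ hk₄ H₄ m4).2 p hp).2
  have ne1 : ∃ r, r ∈ H₁ := Finset.card_pos.1 (by rw [(hmem k₁ hk₁ H₁ m1).1]; norm_num)
    |>.imp fun r hr => hr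
  have ne2 : ∃ r, r ∈ H₂ := Finset.card_pos.1 (by rw [(hmem k₂ hk₂ H₂ m2).1]; norm_num)
    |>.imp fun r hr => hr
  have ne3 : ∃ r, r ∈ H₃ := Finset.card_pos.1 (by rw [(hmem k₃ hk₃ H₃ m3).1]; norm_num)
    |>.imp fun r hr => hr
  have ne4 : ∃ r, r ∈ H₄ := Finset.card_pos.1 (by rw [(hmem k₄ hk₄ H₄ m4).1]; norm_num)
    |>.imp fun r hr => hr
  -- membership transfer along hE
  have mem34 : ∀ r, r ∈ H₃ ∨ r ∈ H₄ → r ∈ H₁ ∨ r ∈ H₂ := by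
    intro r hr
    have : r ∈ H₁.val + H₂.val := by
      rw [hE, Multiset.mem_add]
      exact hr
    exact Multiset.mem_add.1 this
  have mem12 : ∀ r, r ∈ H₁ ∨ r ∈ H₂ → r ∈ H₃ ∨ r ∈ H₄ := by
    intro r hr
    have : r ∈ H₃.val + H₄.val := by
      rw [← hE, Multiset.mem_add]
      exact hr
    exact Multiset.mem_add.1 this
  by_cases h12 : k₁ = k₂
  · -- all same k
    obtain ⟨r, hr⟩ := ne3
    have hk3' : k₃ = k₁ := by
      rcases mem34 r (Or.inl hr) with h | h
      · exact window_unique hk₃ hk₁ (w3 r hr) (w1 r h)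
      · exact window_unique hk₃ hk₁ (w3 r hr) ((h12 ▸ w2) r h)
    obtain ⟨r', hr'⟩ := ne4
    have hk4' : k₄ = k₁ := by
      rcases mem34 r' (Or.inr hr') with h | h
      · exact window_unique hk₄ hk₁ (w4 r' hr') (w1 r' h)
      · exact window_unique hk₄ hk₁ (w4 r' hr') ((h12 ▸ w2) r' h)
    exact quad_quad 𝓗 hmem hi hii k₁ hk₁ H₁ H₂ H₃ H₄ m1 (h12 ▸ m2) (hk3' ▸ m3)
      (hk4' ▸ m4) hE
  · obtain ⟨r3, hr3⟩ := ne3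
    obtain ⟨r4, hr4⟩ := ne4
    have hk3' : k₃ = k₁ ∨ k₃ = k₂ := by
      rcases mem34 r3 (Or.inl hr3) with h | h
      · exact Or.inl (window_unique hk₃ hk₁ (w3 r3 hr3) (w1 r3 h))
      · exact Or.inr (window_unique hk₃ hk₂ (w3 r3 hr3) (w2 r3 h))
    have hk4' : k₄ = k₁ ∨ k₄ = k₂ := by
      rcases mem34 r4 (Or.inr hr4) with h | h
      · exact Or.inl (window_unique hk₄ hk₁ (w4 r4 hr4) (w1 r4 h))
      · exact Or.inr (window_unique hk₄ hk₂ (w4 r4 hr4) (w2 r4 h))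
    -- filter helper
    have filt : ∀ (k : ℕ), 11 ≤ k →
        (H₁.val.filter (fun r => 2 ^ (k - 1) < r ∧ r < 2 ^ k)) +
        (H₂.val.filter (fun r => 2 ^ (k - 1) < r ∧ r < 2 ^ k)) =
        (H₃.val.filter (fun r => 2 ^ (k - 1) < r ∧ r < 2 ^ k)) +
        (H₄.val.filter (fun r => 2 ^ (k - 1) < r ∧ r < 2 ^ k)) := by
      intro k hk
      rw [← Multiset.filter_add, ← Multiset.filter_add, hE]
    have fself : ∀ (H : Finset ℕ) (k : ℕ),
        (∀ p ∈ H, 2 ^ (k - 1) < p ∧ p < 2 ^ k) →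
        H.val.filter (fun r => 2 ^ (k - 1) < r ∧ r < 2 ^ k) = H.val := by
      intro H k hw
      exact Multiset.filter_eq_self.2 (fun r hr => hw r hr)
    have fnil : ∀ (H : Finset ℕ) (k k' : ℕ), 11 ≤ k → 11 ≤ k' → k ≠ k' →
        (∀ p ∈ H, 2 ^ (k' - 1) < p ∧ p < 2 ^ k') →
        H.val.filter (fun r => 2 ^ (k - 1) < r ∧ r < 2 ^ k) = 0 := by
      intro H k k' hk hk' hne hw
      refine Multiset.filter_eq_nil.2 (fun r hr hP => ?_)
      exact hne (window_unique hk hk' hP (hw r hr))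
    rcases hk3' with h3 | h3 <;> rcases hk4' with h4 | h4
    · -- k₃ = k₁, k₄ = k₁ : impossible
      exfalso
      obtain ⟨r, hr⟩ := ne2
      have := mem12 r (Or.inr hr)
      rcases this with h | h
      · exact h12 ((window_unique hk₂ hk₃ (w2 r hr) (w3 r h)).trans h3).symm
      · exact h12 ((window_unique hk₂ hk₄ (w2 r hr) (w4 r h)).trans h4).symm
    · -- k₃ = k₁, k₄ = k₂ : aligned
      left
      have f := filt k₁ hk₁
      rw [fself H₁ k₁ w1, fself H₃ k₁ (h3 ▸ w3),
        fnil H₂ k₁ k₂ hk₁ hk₂ h12 w2, fnil H₄ k₁ k₂ hk₁ hk₂ h12 (h4 ▸ w4)] at f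
      simp only [add_zero] at f
      have e13 : H₁ = H₃ := Finset.val_injective f
      refine ⟨e13, Finset.val_injective ?_⟩
      have : H₁.val + H₂.val = H₁.val + H₄.val := by rw [hE, ← f]
      exact add_left_cancel this
    · -- k₃ = k₂, k₄ = k₁ : crossed
      right
      have f := filt k₁ hk₁
      rw [fself H₁ k₁ w1, fself H₄ k₁ (h4 ▸ w4),
        fnil H₂ k₁ k₂ hk₁ hk₂ h12 w2, fnil H₃ k₁ k₂ hk₁ hk₂ h12 (h3 ▸ w3)] at f
      simp only [add_zero, zero_add] at f
      have e14 : H₁ = H₄ := Finset.val_injective f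
      refine ⟨e14, Finset.val_injective ?_⟩
      have : H₂.val + H₁.val = H₃.val + H₁.val := by
        rw [add_comm, hE]
        rw [show H₁.val = H₄.val from f]
      exact add_right_cancel this
    · -- k₃ = k₂, k₄ = k₂ : impossible
      exfalso
      obtain ⟨r, hr⟩ := ne1
      have := mem12 r (Or.inl hr)
      rcases this with h | h
      · exact h12 ((window_unique hk₁ hk₃ (w1 r hr) (w3 r h)).trans h3)
      · exact h12 ((window_unique hk₁ hk₄ (w1 r hr) (w4 r h)).trans h4)

/-- `A` is a multiplicative Sidon set: for every `s`, the equation `x * y = s` has at most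
one solution (up to ordering) with `x, y ∈ A`. -/
def MulSidon (A : Set ℕ) : Prop :=
  ∀ x ∈ A, ∀ y ∈ A, ∀ z ∈ A, ∀ w ∈ A, x * y = z * w → (x = z ∧ y = w) ∨ (x = w ∧ y = z)

theorem stmt_18 (𝓗 : ℕ → Set (Finset ℕ))
    (hmem : ∀ k, 11 ≤ k → ∀ H ∈ 𝓗 k, H.card = 4 ∧
      ∀ p ∈ H, p.Prime ∧ 2 ^ (k - 1) < p ∧ p < 2 ^ k)
    (hi : ∀ k, 11 ≤ k → ∀ H₁ ∈ 𝓗 k, ∀ H₂ ∈ 𝓗 k, H₁ ≠ H₂ → (H₁ ∩ H₂).card ≤ 2)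
    (hii : ∀ k, 11 ≤ k → ∀ K L M N : Finset ℕ,
      (∀ p ∈ K ∪ L ∪ M ∪ N, p.Prime ∧ 2 ^ (k - 1) < p ∧ p < 2 ^ k) →
      K.card = 2 → L.card = 2 → M.card = 2 → N.card = 2 →
      Disjoint K L → Disjoint K M → Disjoint K N →
      Disjoint L M → Disjoint L N → Disjoint M N →
      ¬(K ∪ L ∈ 𝓗 k ∧ L ∪ M ∈ 𝓗 k ∧ M ∪ N ∈ 𝓗 k ∧ N ∪ K ∈ 𝓗 k)) :
    MulSidon ({p : ℕ | p.Prime} ∪ ⋃ k ∈ {k : ℕ | 11 ≤ k}, {m : ℕ | ∃ H ∈ 𝓗 k, m = H.prod id}) := by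
  have repr : ∀ a : ℕ,
      a ∈ ({p : ℕ | p.Prime} ∪ ⋃ k ∈ {k : ℕ | 11 ≤ k}, {m : ℕ | ∃ H ∈ 𝓗 k, m = H.prod id}) →
      ∃ S : Multiset ℕ, a = S.prod ∧ (∀ p ∈ S, Nat.Prime p) ∧
        ((∃ p, S = {p}) ∨ ∃ k, 11 ≤ k ∧ ∃ H ∈ 𝓗 k, S = H.val) := by
    intro a ha
    rcases ha with ha | ha
    · exact ⟨{a}, by simp, by simpa using ha, Or.inl ⟨a, rfl⟩⟩
    · simp only [Set.mem_iUnion, Set.mem_setOf_eq] at ha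
      obtain ⟨k, hk, H, hH, rfl⟩ := ha
      refine ⟨H.val, ?_, fun p hp => ((hmem k hk H hH).2 p hp).1, Or.inr ⟨k, hk, H, hH, rfl⟩⟩
      rw [Finset.prod_eq_multiset_prod, Multiset.map_id]
  intro x hx y hy z hz w hw hmul
  obtain ⟨S₁, rfl, P₁, D₁⟩ := repr x hx
  obtain ⟨S₂, rfl, P₂, D₂⟩ := repr y hy
  obtain ⟨S₃, rfl, P₃, D₃⟩ := repr z hz
  obtain ⟨S₄, rfl, P₄, D₄⟩ := repr w hw
  have hE : S₁ + S₂ = S₃ + S₄ := key_mult _ _ _ _ P₁ P₂ P₃ P₄ hmul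
  clear hmul hx hy hz hw P₁ P₂ P₃ P₄
  rcases D₁ with ⟨p₁, rfl⟩ | ⟨k₁, hk₁, G₁, m1, rfl⟩ <;>
    rcases D₂ with ⟨p₂, rfl⟩ | ⟨k₂, hk₂, G₂, m2, rfl⟩ <;>
    rcases D₃ with ⟨p₃, rfl⟩ | ⟨k₃, hk₃, G₃, m3, rfl⟩ <;>
    rcases D₄ with ⟨p₄, rfl⟩ | ⟨k₄, hk₄, G₄, m4, rfl⟩
  -- (s,s,s,s)
  · rcases pair_eq hE with ⟨h1, h2⟩ | ⟨h1, h2⟩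
    · exact Or.inl ⟨by rw [h1], by rw [h2]⟩
    · exact Or.inr ⟨by rw [h1], by rw [h2]⟩
  -- (s,s,s,q)
  · exfalso
    have hc := congrArg Multiset.card hE
    have e4 : Multiset.card G₄.val = 4 := (hmem k₄ hk₄ G₄ m4).1
    simp only [Multiset.card_add, Multiset.card_singleton, e4] at hc
    omega
  -- (s,s,q,s)
  · exfalso
    have hc := congrArg Multiset.card hE
    have e3 : Multiset.card G₃.val = 4 := (hmem k₃ hk₃ G₃ m3).1
    simp only [Multiset.card_add, Multiset.card_singleton, e3] at hc
    omega
  -- (s,s,q,q)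
  · exfalso
    have hc := congrArg Multiset.card hE
    have e3 : Multiset.card G₃.val = 4 := (hmem k₃ hk₃ G₃ m3).1
    have e4 : Multiset.card G₄.val = 4 := (hmem k₄ hk₄ G₄ m4).1
    simp only [Multiset.card_add, Multiset.card_singleton, e3, e4] at hc
    omega
  -- (s,q,s,s)
  · exfalso
    have hc := congrArg Multiset.card hE
    have e2 : Multiset.card G₂.val = 4 := (hmem k₂ hk₂ G₂ m2).1
    simp only [Multiset.card_add, Multiset.card_singleton, e2] at hc
    omega
  -- (s,q,s,q)
  · rw [Multiset.singleton_add, Multiset.singleton_add] at hE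
    obtain ⟨h1, h2⟩ := mixed 𝓗 hmem hi hk₂ hk₄ m2 m4 hE
    exact Or.inl ⟨by rw [h1], by rw [h2]⟩
  -- (s,q,q,s)
  · rw [add_comm G₃.val] at hE
    rw [Multiset.singleton_add, Multiset.singleton_add] at hE
    obtain ⟨h1, h2⟩ := mixed 𝓗 hmem hi hk₂ hk₃ m2 m3 hE
    exact Or.inr ⟨by rw [h1], by rw [h2]⟩
  -- (s,q,q,q)
  · exfalso
    have hc := congrArg Multiset.card hE
    have e2 : Multiset.card G₂.val = 4 := (hmem k₂ hk₂ G₂ m2).1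
    have e3 : Multiset.card G₃.val = 4 := (hmem k₃ hk₃ G₃ m3).1
    have e4 : Multiset.card G₄.val = 4 := (hmem k₄ hk₄ G₄ m4).1
    simp only [Multiset.card_add, Multiset.card_singleton, e2, e3, e4] at hc
    omega
  -- (q,s,s,s)
  · exfalso
    have hc := congrArg Multiset.card hE
    have e1 : Multiset.card G₁.val = 4 := (hmem k₁ hk₁ G₁ m1).1
    simp only [Multiset.card_add, Multiset.card_singleton, e1] at hc
    omega
  -- (q,s,s,q)
  · rw [add_comm G₁.val] at hE
    rw [Multiset.singleton_add, Multiset.singleton_add] at hE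
    obtain ⟨h1, h2⟩ := mixed 𝓗 hmem hi hk₁ hk₄ m1 m4 hE
    exact Or.inr ⟨by rw [h2], by rw [h1]⟩
  -- (q,s,q,s)
  · rw [add_comm G₁.val, add_comm G₃.val] at hE
    rw [Multiset.singleton_add, Multiset.singleton_add] at hE
    obtain ⟨h1, h2⟩ := mixed 𝓗 hmem hi hk₁ hk₃ m1 m3 hE
    exact Or.inl ⟨by rw [h2], by rw [h1]⟩
  -- (q,s,q,q)
  · exfalso
    have hc := congrArg Multiset.card hE
    have e1 : Multiset.card G₁.val = 4 := (hmem k₁ hk₁ G₁ m1).1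
    have e3 : Multiset.card G₃.val = 4 := (hmem k₃ hk₃ G₃ m3).1
    have e4 : Multiset.card G₄.val = 4 := (hmem k₄ hk₄ G₄ m4).1
    simp only [Multiset.card_add, Multiset.card_singleton, e1, e3, e4] at hc
    omega
  -- (q,q,s,s)
  · exfalso
    have hc := congrArg Multiset.card hE
    have e1 : Multiset.card G₁.val = 4 := (hmem k₁ hk₁ G₁ m1).1
    have e2 : Multiset.card G₂.val = 4 := (hmem k₂ hk₂ G₂ m2).1
    simp only [Multiset.card_add, Multiset.card_singleton, e1, e2] at hc
    omega
  -- (q,q,s,q)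
  · exfalso
    have hc := congrArg Multiset.card hE
    have e1 : Multiset.card G₁.val = 4 := (hmem k₁ hk₁ G₁ m1).1
    have e2 : Multiset.card G₂.val = 4 := (hmem k₂ hk₂ G₂ m2).1
    have e4 : Multiset.card G₄.val = 4 := (hmem k₄ hk₄ G₄ m4).1
    simp only [Multiset.card_add, Multiset.card_singleton, e1, e2, e4] at hc
    omega
  -- (q,q,q,s)
  · exfalso
    have hc := congrArg Multiset.card hE
    have e1 : Multiset.card G₁.val = 4 := (hmem k₁ hk₁ G₁ m1).1
    have e2 : Multiset.card G₂.val = 4 := (hmem k₂ hk₂ G₂ m2).1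
    have e3 : Multiset.card G₃.val = 4 := (hmem k₃ hk₃ G₃ m3).1
    simp only [Multiset.card_add, Multiset.card_singleton, e1, e2, e3] at hc
    omega
  -- (q,q,q,q)
  · rcases quad_quad_gen 𝓗 hmem hi hii hk₁ hk₂ hk₃ hk₄ m1 m2 m3 m4 hE with
      ⟨h1, h2⟩ | ⟨h1, h2⟩
    · exact Or.inl ⟨by rw [h1], by rw [h2]⟩
    · exact Or.inr ⟨by rw [h1], by rw [h2]⟩
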